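/- arXiv:2209.06779 — 2 statements merged into one kernel-verified Lean document; each statement's English description precedes it below -/
import Mathlib

section
/- Let X be an arbitrary 2×2 real matrix and let π(X) be a minimizer over W ∈ SO(2) of ‖X − W‖_F². Then for any R ∈ SO(2), ‖π(X) − R‖_F ≤ 2‖X − R‖_F. -/
open Matrix

/-- `SO(2)`: real 2×2 orthogonal matrices with determinant 1. -/
def SO2 (R : Matrix (Fin 2) (Fin 2) ℝ) : Prop := R * Rᵀ = 1 ∧ R.det = 1

/-- Squared Frobenius norm of a 2×2 real matrix. -/
def frobSq (X : Matrix (Fin 2) (Fin 2) ℝ) : ℝ := ∑ i, ∑ j, (X i j) ^ 2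

/-- Frobenius norm of a 2×2 real matrix. -/
noncomputable def frob (X : Matrix (Fin 2) (Fin 2) ℝ) : ℝ := Real.sqrt (frobSq X)

theorem norm_sub_le_two_mul_of_norm_sub_le {E : Type*} [SeminormedAddCommGroup E] {x p r : E}
    (h : ‖x - p‖ ≤ ‖x - r‖) : ‖p - r‖ ≤ 2 * ‖x - r‖ :=
  calc ‖p - r‖ ≤ ‖p - x‖ + ‖x - r‖ := norm_sub_le_norm_sub_add_norm_sub p x r
    _ = ‖x - p‖ + ‖x - r‖ := by rw [norm_sub_rev]
    _ ≤ 2 * ‖x - r‖ := by linarith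

section Frobenius

attribute [local instance] Matrix.frobeniusNormedAddCommGroup

theorem frobSq_eq_norm_sq (X : Matrix (Fin 2) (Fin 2) ℝ) : frobSq X = ‖X‖ ^ 2 := by
  rw [frobenius_norm_def, ← Real.sqrt_eq_rpow, Real.sq_sqrt (by positivity), frobSq]
  simp only [Real.norm_eq_abs, Real.rpow_two, sq_abs]

theorem frob_eq_norm (X : Matrix (Fin 2) (Fin 2) ℝ) : frob X = ‖X‖ := by
  rw [frob, frobSq_eq_norm_sq, Real.sqrt_sq (norm_nonneg X)]

theorem stmt0_general (X piX : Matrix (Fin 2) (Fin 2) ℝ)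
    (hmin : ∀ W : Matrix (Fin 2) (Fin 2) ℝ, SO2 W → frobSq (X - piX) ≤ frobSq (X - W)) :
    ∀ R : Matrix (Fin 2) (Fin 2) ℝ, SO2 R → frob (piX - R) ≤ 2 * frob (X - R) := by
  intro R hR
  have hclosest : ‖X - piX‖ ≤ ‖X - R‖ := by
    have hsq := hmin R hR
    rw [frobSq_eq_norm_sq, frobSq_eq_norm_sq] at hsq
    exact (pow_le_pow_iff_left₀ (norm_nonneg _) (norm_nonneg _) two_ne_zero).mp hsq
  rw [frob_eq_norm, frob_eq_norm]
  exact norm_sub_le_two_mul_of_norm_sub_le hclosest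

/-- If `π X` minimizes `‖X − W‖_F²` over `W ∈ SO(2)`, then for any `R ∈ SO(2)`,
`‖π X − R‖_F ≤ 2 ‖X − R‖_F`. -/
theorem stmt0 (X piX : Matrix (Fin 2) (Fin 2) ℝ)
    (hpi : SO2 piX)
    (hmin : ∀ W : Matrix (Fin 2) (Fin 2) ℝ, SO2 W → frobSq (X - piX) ≤ frobSq (X - W)) :
    ∀ R : Matrix (Fin 2) (Fin 2) ℝ, SO2 R → frob (piX - R) ≤ 2 * frob (X - R) :=
  stmt0_general X piX hmin

end Frobenius
end

section
/- Let μ be a probability measure on ℝ² with no line of full measure, and let s₁, s₂ ∈ ℝ² be two points not colinear with the origin. Define, for Θ = (R, t) with R ∈ ℝ^{2×2} and t ∈ ℝ², the function P(Θ) = (1/2) Σ_{i=1,2} ∫ (‖a − R sᵢ − t‖ − ‖a − R⁰ sᵢ − t⁰‖)² dμ(a). Then P(Θ) = 0 implies R sᵢ + t = R⁰ sᵢ + t⁰ for i = 1, 2, and consequently (since S = [s₁ s₂] is invertible and using a third affine independence) R = R⁰ and t = t⁰ when restricted to R, R⁰ ∈ SO(2). In particular P has a unique zero at Θ⁰ =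 (R⁰, t⁰). -/
open MeasureTheory Matrix

/-- The planar rigid motion `s ↦ R s + t` on Euclidean 2-space. -/
noncomputable def rigidAct (R : Matrix (Fin 2) (Fin 2) ℝ) (t : EuclideanSpace ℝ (Fin 2))
    (s : EuclideanSpace ℝ (Fin 2)) : EuclideanSpace ℝ (Fin 2) :=
  (WithLp.equiv 2 (Fin 2 → ℝ)).symm (R.mulVec (WithLp.equiv 2 (Fin 2 → ℝ) s)) + t

/-!
If `∫ (‖a - x‖ - ‖a - y‖)² dμ = 0`, then `μ`-almost every `a` is equidistant from `x` and `y`,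
i.e. `μ` is carried by the perpendicular bisector of `x` and `y`; for `x ≠ y` this is a line,
which `μ` does not charge fully. So the two tags are mapped to the same points by both rigid
motions, and two rotations agreeing on the nonzero vector `s₀ - s₁` coincide, since the
difference of two rotations `[[a, b], [-b, a]]` has determinant `a² + b²`.
-/

section PerpBisector

variable {V : Type*} [NormedAddCommGroup V] [InnerProductSpace ℝ V]

lemma finrank_direction_perpBisector_add_one [FiniteDimensional ℝ V] {x y : V} (hxy : x ≠ y) :
    Module.finrank ℝ (AffineSubspace.perpBisector x y).direction + 1 = Module.finrank ℝ V := by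
  rw [AffineSubspace.direction_perpBisector,
    ← Submodule.finrank_add_finrank_orthogonal (ℝ ∙ (y -ᵥ x)),
    finrank_span_singleton (vsub_ne_zero.mpr hxy.symm), add_comm]

variable [MeasurableSpace V] [BorelSpace V]

lemma ae_mem_perpBisector_of_integral_sq_sub_eq_zero {μ : Measure V} [IsFiniteMeasure μ]
    {x y : V} (h : ∫ a, (‖a - x‖ - ‖a - y‖) ^ 2 ∂μ = 0) :
    ∀ᵐ a ∂μ, a ∈ AffineSubspace.perpBisector x y := by
  have hbound : ∀ a, ‖(‖a - x‖ - ‖a - y‖) ^ 2‖ ≤ ‖x - y‖ ^ 2 := fun a => by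
    rw [norm_pow, Real.norm_eq_abs, ← norm_sub_rev y x, ← sub_sub_sub_cancel_left x y a]
    exact pow_le_pow_left₀ (abs_nonneg _) (abs_norm_sub_norm_le (a - x) (a - y)) 2
  have hint : Integrable (fun a => (‖a - x‖ - ‖a - y‖) ^ 2) μ :=
    (integrable_const (‖x - y‖ ^ 2)).mono' (by fun_prop) (.of_forall hbound)
  filter_upwards [(integral_eq_zero_iff_of_nonneg (fun a => sq_nonneg _) hint).mp h] with a ha
  rw [AffineSubspace.mem_perpBisector_iff_dist_eq, dist_eq_norm, dist_eq_norm]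
  exact sub_eq_zero.mp (pow_eq_zero_iff two_ne_zero |>.mp ha)

end PerpBisector

lemma eq_of_integral_sq_sub_eq_zero (μ : Measure (EuclideanSpace ℝ (Fin 2)))
    [IsProbabilityMeasure μ]
    (hline : ∀ L : AffineSubspace ℝ (EuclideanSpace ℝ (Fin 2)),
      Module.finrank ℝ L.direction = 1 → μ (L : Set (EuclideanSpace ℝ (Fin 2))) < 1)
    {x y : EuclideanSpace ℝ (Fin 2)} (h : ∫ a, (‖a - x‖ - ‖a - y‖) ^ 2 ∂μ = 0) : x = y := by
  by_contra hxy
  have hdim := finrank_direction_perpBisector_add_one hxy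
  rw [finrank_euclideanSpace_fin] at hdim
  have hae := ae_mem_perpBisector_of_integral_sq_sub_eq_zero h
  have hfull : μ (AffineSubspace.perpBisector x y) = 1 := by
    rw [measure_congr (ae_eq_univ.mpr (ae_iff.mp hae)), measure_univ]
  exact (hline _ (by omega)).ne hfull

lemma SO2.entries_eq {R : Matrix (Fin 2) (Fin 2) ℝ} (hR : SO2 R) :
    R 1 1 = R 0 0 ∧ R 1 0 = -R 0 1 := by
  obtain ⟨horth, hdet⟩ := hR
  have e00 := congrFun (congrFun horth 0) 0
  have e01 := congrFun (congrFun horth 0) 1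
  simp only [mul_apply, transpose_apply, Fin.sum_univ_two, one_apply_eq,
    one_apply_ne zero_ne_one] at e00 e01
  rw [det_fin_two] at hdet
  constructor
  · linear_combination -R 1 1 * e00 + R 0 0 * hdet + R 0 1 * e01
  · linear_combination -R 1 0 * e00 - R 0 1 * hdet + R 0 0 * e01

lemma SO2.eq_of_mulVec_eq {R R0 : Matrix (Fin 2) (Fin 2) ℝ} (hR : SO2 R) (hR0 : SO2 R0)
    {v : Fin 2 → ℝ} (hv : v ≠ 0) (h : R *ᵥ v = R0 *ᵥ v) : R = R0 := by
  obtain ⟨hd, hc⟩ := hR.entries_eq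
  obtain ⟨hd0, hc0⟩ := hR0.entries_eq
  have hdet : (R - R0).det = 0 :=
    exists_mulVec_eq_zero_iff.mp ⟨v, hv, by rw [sub_mulVec, h, sub_self]⟩
  rw [det_fin_two] at hdet
  simp only [Matrix.sub_apply, hd, hc, hd0, hc0] at hdet
  have ha : R 0 0 = R0 0 0 := by nlinarith [sq_nonneg (R 0 0 - R0 0 0), sq_nonneg (R 0 1 - R0 0 1)]
  have hb : R 0 1 = R0 0 1 := by nlinarith [sq_nonneg (R 0 0 - R0 0 0), sq_nonneg (R 0 1 - R0 0 1)]
  ext i j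
  fin_cases i <;> fin_cases j <;> simp [ha, hb, hc, hc0, hd, hd0]

lemma rigidAct_sub_rigidAct (R : Matrix (Fin 2) (Fin 2) ℝ) (t x y : EuclideanSpace ℝ (Fin 2)) :
    rigidAct R t x - rigidAct R t y = WithLp.toLp 2 (R *ᵥ WithLp.ofLp (x - y)) := by
  ext i
  simp [rigidAct, mulVec_sub]

lemma SO2.eq_of_rigidAct_eq {R R0 : Matrix (Fin 2) (Fin 2) ℝ} (hR : SO2 R) (hR0 : SO2 R0)
    {t t0 x y : EuclideanSpace ℝ (Fin 2)} (hxy : x ≠ y)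
    (hx : rigidAct R t x = rigidAct R0 t0 x) (hy : rigidAct R t y = rigidAct R0 t0 y) :
    R = R0 ∧ t = t0 := by
  have hmulVec : R *ᵥ WithLp.ofLp (x - y) = R0 *ᵥ WithLp.ofLp (x - y) := by
    have h := rigidAct_sub_rigidAct R t x y
    rw [hx, hy, rigidAct_sub_rigidAct] at h
    exact (WithLp.toLp_injective 2 h).symm
  have hRR0 := hR.eq_of_mulVec_eq hR0 (by rwa [Ne, WithLp.ofLp_eq_zero, sub_eq_zero]) hmulVec
  subst hRR0
  exact ⟨rfl, add_left_cancel hx⟩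

/-- Identifiability (Theorem 4's key step): if `μ` gives no line full measure and the two tags
`s 0, s 1` are not colinear with the origin, then vanishing of
`P(Θ) = (1/2) ∑ᵢ ∫ (‖a − R sᵢ − t‖ − ‖a − R⁰ sᵢ − t⁰‖)² dμ(a)` forces
`R sᵢ + t = R⁰ sᵢ + t⁰` for both tags, and hence (for rotations) `R = R⁰` and `t = t⁰`. -/
theorem stmt12 (μ : Measure (EuclideanSpace ℝ (Fin 2))) [IsProbabilityMeasure μ]
    (hline : ∀ L : AffineSubspace ℝ (EuclideanSpace ℝ (Fin 2)),
      Module.finrank ℝ L.direction = 1 → μ (L : Set (EuclideanSpace ℝ (Fin 2))) < 1)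
    (s : Fin 2 → EuclideanSpace ℝ (Fin 2)) (hs : LinearIndependent ℝ s)
    (R R0 : Matrix (Fin 2) (Fin 2) ℝ) (t t0 : EuclideanSpace ℝ (Fin 2))
    (hR : SO2 R) (hR0 : SO2 R0)
    (hP : (1 / 2 : ℝ) * ∑ i : Fin 2,
        ∫ a, (‖a - rigidAct R t (s i)‖ - ‖a - rigidAct R0 t0 (s i)‖) ^ 2 ∂μ = 0) :
    (∀ i : Fin 2, rigidAct R t (s i) = rigidAct R0 t0 (s i)) ∧ R = R0 ∧ t = t0 := by
  have hsum : ∑ i : Fin 2,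
      ∫ a, (‖a - rigidAct R t (s i)‖ - ‖a - rigidAct R0 t0 (s i)‖) ^ 2 ∂μ = 0 := by linarith
  have hzero i := (Finset.sum_eq_zero_iff_of_nonneg fun i _ =>
    integral_nonneg fun a => sq_nonneg _).mp hsum i (Finset.mem_univ i)
  have hact i := eq_of_integral_sq_sub_eq_zero μ hline (hzero i)
  exact ⟨hact, hR.eq_of_rigidAct_eq hR0 (hs.injective.ne zero_ne_one) (hact 0) (hact 1)⟩
end
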